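/- arXiv:1807.07360 — 2 statements merged into one kernel-verified Lean document; each statement's English description precedes it below -/
import Mathlib

section
/- Let (q_n) be nonnegative reals with q_n ~ c·(log n)/2^{n(d-2)} for some c > 0 and ∑ q_n = 1, where d ≥ 5. Define a ℤ^d-valued random variable X by P(X = ±2^n e_k) = q_n/(2d) for n ≥ 1 and basis vectors e_k. Then E[|X|^{d-2}] = ∞ while E[|X|^{d-2} / (log|X|)^{1+ε}] < ∞ for every ε > 0. -/
open Filter

/-- Williamson-type example: with `q_n ∼ c (log n)/2^{n(d-2)}`, `∑ q_n = 1`, `d ≥ 5`, and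
`P(X = ±2^n e_k) = q_n/(2d)`, one has `E[|X|^{d-2}] = ∞` while
`E[|X|^{d-2}/(log |X|)^{1+ε}] < ∞` for every `ε > 0`. The expectations are sums over the
countable support of `X`, indexed by `(n, k, sign)` with the point `±2^{n+1} e_k`. -/
theorem stmt_7 (d : ℕ) (hd : 5 ≤ d) (c : ℝ) (hc : 0 < c) (q : ℕ → ℝ)
    (hq0 : ∀ n, 0 ≤ q n)
    (hqsum : ∑' n : ℕ, q (n + 1) = 1)
    (hasym : Tendsto (fun n : ℕ => q n / (c * Real.log n / 2 ^ (n * (d - 2))))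
      atTop (nhds 1))
    (pt : ℕ × Fin d × Bool → EuclideanSpace ℝ (Fin d))
    (hpt : ∀ x : ℕ × Fin d × Bool, pt x = fun i =>
      if i = x.2.1 then (if x.2.2 then (2 : ℝ) ^ (x.1 + 1) else -((2 : ℝ) ^ (x.1 + 1)))
      else 0) :
    ¬ Summable (fun x : ℕ × Fin d × Bool => q (x.1 + 1) / (2 * d) * ‖pt x‖ ^ (d - 2)) ∧
    ∀ ε : ℝ, 0 < ε → Summable (fun x : ℕ × Fin d × Bool =>
      q (x.1 + 1) / (2 * d) * ‖pt x‖ ^ (d - 2) / Real.log ‖pt x‖ ^ (1 + ε)) := by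
  have hd0 : (0:ℝ) < 2 * d := by positivity
  -- the norm of the points
  have hnorm : ∀ x : ℕ × Fin d × Bool, ‖pt x‖ = 2 ^ (x.1 + 1) := by
    intro x
    have hx : pt x = EuclideanSpace.single x.2.1
        (if x.2.2 then (2:ℝ) ^ (x.1 + 1) else -((2:ℝ) ^ (x.1 + 1))) := by
      ext j
      rw [hpt]
      simp [EuclideanSpace.single_apply]
    rw [hx, EuclideanSpace.norm_single]
    cases x.2.2 <;> simp [abs_of_nonneg, (by positivity : (0:ℝ) ≤ 2 ^ (x.1+1))]
  set r : ℕ → ℝ := fun n => q n / (c * Real.log n / 2 ^ (n * (d - 2))) with hr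
  -- key identity
  have hq_eq : ∀ n : ℕ, 1 ≤ n →
      q (n + 1) * 2 ^ ((n + 1) * (d - 2)) = r (n + 1) * (c * Real.log (↑(n + 1))) := by
    intro n hn
    have hlog : 0 < Real.log (↑(n + 1) : ℝ) := by
      apply Real.log_pos
      have : (2:ℝ) ≤ (↑(n+1) : ℝ) := by exact_mod_cast Nat.succ_le_succ hn
      linarith
    have hs : c * Real.log (↑(n + 1) : ℝ) / 2 ^ ((n + 1) * (d - 2)) ≠ 0 := by
      positivity
    have hq : q (n + 1) = r (n + 1) * (c * Real.log (↑(n + 1) : ℝ) / 2 ^ ((n + 1) * (d - 2))) :=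
      (div_mul_cancel₀ _ hs).symm
    rw [hq]
    field_simp
  have hrlim : Tendsto (fun n : ℕ => r (n + 1)) atTop (nhds 1) :=
    hasym.comp (tendsto_add_atTop_nat 1)
  constructor
  · -- not summable
    intro h
    have hk0 : (0:ℕ) < d := by omega
    have hinj : Function.Injective (fun n : ℕ => ((n, ⟨0, hk0⟩, true) : ℕ × Fin d × Bool)) := by
      intro a b hab
      simpa using congrArg Prod.fst hab
    have hsum := h.comp_injective hinj
    have hzero := hsum.tendsto_atTop_zero
    have hAT : Tendsto (fun n : ℕ =>
        q ((n, (⟨0, hk0⟩ : Fin d), true).1 + 1) / (2 * d) *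
          ‖pt (n, ⟨0, hk0⟩, true)‖ ^ (d - 2)) atTop atTop := by
      have h1 : Tendsto (fun n : ℕ => r (n + 1) * c / (2 * d)) atTop (nhds (c / (2 * d))) := by
        have := (hrlim.mul_const c).div_const (2 * (d:ℝ))
        simpa using this
      have h2 : Tendsto (fun n : ℕ => Real.log (↑(n + 1) : ℝ)) atTop atTop :=
        Real.tendsto_log_atTop.comp (tendsto_natCast_atTop_atTop.comp (tendsto_add_atTop_nat 1))
      have h3 := Tendsto.pos_mul_atTop (by positivity : (0:ℝ) < c / (2 * d)) h1 h2
      refine h3.congr' ?_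
      filter_upwards [eventually_ge_atTop 1] with n hn
      have := hq_eq n hn
      rw [hnorm]
      simp only
      rw [← pow_mul]
      rw [show q (n + 1) / (2 * ↑d) * 2 ^ ((n + 1) * (d - 2))
          = q (n + 1) * 2 ^ ((n + 1) * (d - 2)) / (2 * ↑d) by ring, this]
      ring
    exact not_tendsto_atTop_of_tendsto_nhds hzero hAT
  · -- summable with log correction
    intro ε hε
    set F : ℕ × Fin d × Bool → ℝ := fun x =>
      q (x.1 + 1) / (2 * d) * ‖pt x‖ ^ (d - 2) / Real.log ‖pt x‖ ^ (1 + ε) with hF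
    set G : ℕ → ℝ := fun n =>
      q (n + 1) / (2 * d) * ((2:ℝ) ^ (n + 1)) ^ (d - 2) / ((↑(n + 1) : ℝ) * Real.log 2) ^ (1 + ε)
      with hG
    have hFG : ∀ x, F x = G x.1 := by
      intro x
      simp only [hF, hG, hnorm x, Real.log_pow]
    have hGnonneg : ∀ n, 0 ≤ G n := by
      intro n
      have h1 : (0:ℝ) ≤ (↑(n + 1) : ℝ) * Real.log 2 :=
        mul_nonneg (by positivity) (Real.log_nonneg (by norm_num))
      exact div_nonneg (mul_nonneg (div_nonneg (hq0 _) (by positivity)) (by positivity))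
        (Real.rpow_nonneg h1 _)
    have hGsum : Summable G := by
      refine summable_of_isBigO_nat
        (Real.summable_nat_rpow.2 (by linarith : -(1 + ε/2) < -1)) ?_
      rw [Asymptotics.isBigO_iff]
      refine ⟨2 * c / (2 * d) * (2 / ε) / Real.log 2 ^ (1 + ε), ?_⟩
      have hr2 : ∀ᶠ n : ℕ in atTop, r (n + 1) ≤ 2 := by
        have : ∀ᶠ x : ℝ in nhds 1, x ≤ 2 := eventually_le_nhds (by norm_num)
        exact hrlim.eventually this
      filter_upwards [hr2, eventually_ge_atTop 1] with n hrn hn1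
      have hlog2 : (0:ℝ) < Real.log 2 := Real.log_pos (by norm_num)
      have hn1R : (1:ℝ) ≤ (n:ℝ) := by exact_mod_cast hn1
      have hnpos : (0:ℝ) < (↑(n + 1) : ℝ) := by positivity
      have hGval : G n = r (n + 1) * (c * Real.log (↑(n + 1) : ℝ)) /
          ((2 * d) * ((↑(n + 1) : ℝ) * Real.log 2) ^ (1 + ε)) := by
        simp only [hG, ← pow_mul]
        rw [← hq_eq n hn1]
        ring
      have hlogn : 0 ≤ Real.log (↑(n + 1) : ℝ) := Real.log_natCast_nonneg _
      have hrpos : 0 ≤ r (n + 1) := by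
        apply div_nonneg (hq0 _)
        positivity
      -- numerator bound
      have hnum : r (n + 1) * (c * Real.log (↑(n + 1) : ℝ)) ≤
          2 * c * ((↑(n + 1) : ℝ) ^ (ε/2) / (ε/2)) := by
        have hlb : Real.log (↑(n + 1) : ℝ) ≤ (↑(n + 1) : ℝ) ^ (ε/2) / (ε/2) :=
          Real.log_le_rpow_div hnpos.le (by positivity)
        calc r (n + 1) * (c * Real.log (↑(n + 1) : ℝ))
            ≤ 2 * (c * Real.log (↑(n + 1) : ℝ)) := by
              apply mul_le_mul_of_nonneg_right hrn (by positivity)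
          _ ≤ 2 * (c * ((↑(n + 1) : ℝ) ^ (ε/2) / (ε/2))) := by
              apply mul_le_mul_of_nonneg_left _ (by norm_num)
              exact mul_le_mul_of_nonneg_left hlb hc.le
          _ = 2 * c * ((↑(n + 1) : ℝ) ^ (ε/2) / (ε/2)) := by ring
      -- denominator expansion
      have hden : ((↑(n + 1) : ℝ) * Real.log 2) ^ (1 + ε)
          = (↑(n + 1) : ℝ) ^ (1 + ε) * Real.log 2 ^ (1 + ε) :=
        Real.mul_rpow hnpos.le hlog2.le
      have hdenpos : 0 < (↑(n + 1) : ℝ) ^ (1 + ε) * Real.log 2 ^ (1 + ε) := by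
        apply mul_pos <;> exact Real.rpow_pos_of_pos (by positivity) _
      have hGle : G n ≤ 2 * c / (2 * d) * (2 / ε) / Real.log 2 ^ (1 + ε) *
          (↑(n + 1) : ℝ) ^ (-(1 + ε/2)) := by
        rw [hGval, hden]
        have hexp : (↑(n + 1) : ℝ) ^ (-(1 + ε/2))
            = (↑(n + 1) : ℝ) ^ (ε/2) / (↑(n + 1) : ℝ) ^ (1 + ε) := by
          rw [← Real.rpow_sub hnpos]
          ring_nf
        rw [hexp]
        rw [div_le_iff₀ (by positivity)]
        have h2 : 0 < (↑(n + 1) : ℝ) ^ (1 + ε) := Real.rpow_pos_of_pos hnpos _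
        have h3 : 0 < Real.log 2 ^ (1 + ε) := Real.rpow_pos_of_pos hlog2 _
        calc r (n + 1) * (c * Real.log (↑(n + 1) : ℝ))
            ≤ 2 * c * ((↑(n + 1) : ℝ) ^ (ε/2) / (ε/2)) := hnum
          _ = 2 * c / (2 * d) * (2 / ε) / Real.log 2 ^ (1 + ε) *
              ((↑(n + 1) : ℝ) ^ (ε/2) / (↑(n + 1) : ℝ) ^ (1 + ε)) *
              (2 * ↑d * ((↑(n + 1) : ℝ) ^ (1 + ε) * Real.log 2 ^ (1 + ε))) := by
            field_simp
      have hmono : (↑(n + 1) : ℝ) ^ (-(1 + ε/2)) ≤ (n:ℝ) ^ (-(1 + ε/2)) := by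
        apply Real.rpow_le_rpow_of_nonpos (by linarith) (by push_cast; linarith)
        linarith
      have hCpos : 0 ≤ 2 * c / (2 * d) * (2 / ε) / Real.log 2 ^ (1 + ε) := by
        have hlog2 : (0:ℝ) < Real.log 2 := Real.log_pos (by norm_num)
        have := Real.rpow_pos_of_pos hlog2 (1 + ε)
        positivity
      have hfinal : G n ≤ 2 * c / (2 * d) * (2 / ε) / Real.log 2 ^ (1 + ε) *
          (n:ℝ) ^ (-(1 + ε/2)) :=
        hGle.trans (mul_le_mul_of_nonneg_left hmono hCpos)
      rw [Real.norm_eq_abs, Real.norm_eq_abs, abs_of_nonneg (hGnonneg n),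
        abs_of_nonneg (Real.rpow_nonneg (by positivity) _)]
      exact hfinal
    have hFnonneg : (0 : (ℕ × Fin d × Bool) → ℝ) ≤ F := by
      intro x
      rw [hFG x]
      exact hGnonneg x.1
    rw [summable_prod_of_nonneg hFnonneg]
    constructor
    · intro n
      exact Summable.of_finite
    · have : (fun n : ℕ => ∑' y : Fin d × Bool, F (n, y))
          = fun n => (2 * d : ℝ) * G n := by
        funext n
        have : ∀ y : Fin d × Bool, F (n, y) = G n := fun y => hFG (n, y)
        rw [tsum_congr this, tsum_const]
        simp [Nat.card_eq_fintype_card, mul_comm, nsmul_eq_mul]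
      rw [this]
      exact hGsum.mul_left _
end

section
/- Let X be a ℤ^d-valued random walk step with the distribution of the previous example, i.e. P(X = ±2^n e_k) = q_n/(2d) with q_n ~ c(log n)/2^{n(d-2)}. Let G(0,x) = ∑_{n≥0} P(S(n) = x) be the Green function of the walk S(n) = X(1)+⋯+X(n). Then for each j, lim_{n→∞} 2^{(d-2)n} G(0, 2^n e_j) = ∞. -/
open Filter Finset

lemma centralBinom_sq_le (m : ℕ) : Nat.centralBinom m ^ 2 * (2 * m + 1) ≤ 16 ^ m := by
  induction m with
  | zero => simp [Nat.centralBinom]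
  | succ m ih =>
    have key := Nat.succ_mul_centralBinom_succ m
    have h1 : ((m + 1) * Nat.centralBinom (m + 1)) ^ 2 * (2 * (m + 1) + 1)
        = (m + 1) ^ 2 * (Nat.centralBinom (m + 1) ^ 2 * (2 * (m + 1) + 1)) := by ring
    have h2 : (2 * (2 * m + 1) * Nat.centralBinom m) ^ 2 * (2 * (m + 1) + 1)
        = (4 * (2 * m + 1) * (2 * m + 3)) * (Nat.centralBinom m ^ 2 * (2 * m + 1)) := by ring
    have h3 : (4 * (2 * m + 1) * (2 * m + 3)) * (Nat.centralBinom m ^ 2 * (2 * m + 1))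
        ≤ (4 * (2 * m + 1) * (2 * m + 3)) * 16 ^ m := Nat.mul_le_mul_left _ ih
    have h4 : 4 * (2 * m + 1) * (2 * m + 3) ≤ 16 * (m + 1) ^ 2 := by nlinarith
    have : (m + 1) ^ 2 * (Nat.centralBinom (m + 1) ^ 2 * (2 * (m + 1) + 1))
        ≤ (m + 1) ^ 2 * 16 ^ (m + 1) := by
      calc (m + 1) ^ 2 * (Nat.centralBinom (m + 1) ^ 2 * (2 * (m + 1) + 1))
          = ((m + 1) * Nat.centralBinom (m + 1)) ^ 2 * (2 * (m + 1) + 1) := by ring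
        _ = (2 * (2 * m + 1) * Nat.centralBinom m) ^ 2 * (2 * (m + 1) + 1) := by rw [key]
        _ ≤ (4 * (2 * m + 1) * (2 * m + 3)) * 16 ^ m := by rw [h2]; exact h3
        _ ≤ 16 * (m + 1) ^ 2 * 16 ^ m := Nat.mul_le_mul_right _ h4
        _ = (m + 1) ^ 2 * 16 ^ (m + 1) := by ring
    exact Nat.le_of_mul_le_mul_left this (by positivity)

lemma choose_half_sq_le (r : ℕ) : (r.choose (r / 2)) ^ 2 * (r + 1) ≤ 4 ^ r := by
  rcases Nat.even_or_odd r with ⟨m, hm⟩ | ⟨m, hm⟩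
  · subst hm
    have h1 : m + m = 2 * m := by ring
    rw [h1]
    have h2 : (2 * m) / 2 = m := by omega
    rw [h2]
    have := centralBinom_sq_le m
    rw [Nat.centralBinom] at this
    calc ((2 * m).choose m) ^ 2 * (2 * m + 1) ≤ 16 ^ m := this
      _ = 4 ^ (2 * m) := by rw [pow_mul]; norm_num
  · subst hm
    have h2 : (2 * m + 1) / 2 = m := by omega
    rw [h2]
    have hsym : (2 * m + 1).choose (m + 1) = (2 * m + 1).choose m := by
      rw [← Nat.choose_symm (show m + 1 ≤ 2 * m + 1 by omega)]
      congr 1; omega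
    have hpas : Nat.centralBinom (m + 1) = 2 * ((2 * m + 1).choose m) := by
      rw [Nat.centralBinom]
      have h3 : 2 * (m + 1) = (2 * m + 1) + 1 := by ring
      rw [h3, Nat.choose_succ_succ, hsym]; ring
    have hcb := centralBinom_sq_le (m + 1)
    rw [hpas] at hcb
    have h5 : (2 * ((2 * m + 1).choose m)) ^ 2 * (2 * (m + 1) + 1)
        = 4 * (((2 * m + 1).choose m) ^ 2 * (2 * m + 3)) := by ring
    rw [h5] at hcb
    have h6 : 16 ^ (m + 1) = 4 * 4 ^ (2 * m + 1) := by
      have : 16 ^ (m+1) = 4 ^ (2 * (m+1)) := by rw [pow_mul]; norm_num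
      rw [this]; ring
    rw [h6] at hcb
    have h7 : ((2 * m + 1).choose m) ^ 2 * (2 * m + 3) ≤ 4 ^ (2 * m + 1) :=
      Nat.le_of_mul_le_mul_left hcb (by norm_num)
    calc ((2 * m + 1).choose m) ^ 2 * (2 * m + 1 + 1)
        ≤ ((2 * m + 1).choose m) ^ 2 * (2 * m + 3) := by
          apply Nat.mul_le_mul_left; omega
      _ ≤ 4 ^ (2 * m + 1) := h7

lemma choose_pair_le {r1 r2 M : ℕ} (h1 : M ≤ r1 + 1) (h2 : M ≤ r2 + 1) :
    (r1.choose (r1 / 2)) * (r2.choose (r2 / 2)) * M ≤ 2 ^ (r1 + r2) := by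
  have key : ((r1.choose (r1 / 2)) * (r2.choose (r2 / 2)) * M) ^ 2 ≤ (2 ^ (r1 + r2)) ^ 2 := by
    calc ((r1.choose (r1 / 2)) * (r2.choose (r2 / 2)) * M) ^ 2
        ≤ ((r1.choose (r1 / 2)) ^ 2 * (r1 + 1)) * ((r2.choose (r2 / 2)) ^ 2 * (r2 + 1)) := by
          have : ((r1.choose (r1 / 2)) * (r2.choose (r2 / 2)) * M) ^ 2
            = ((r1.choose (r1 / 2)) ^ 2 * M) * ((r2.choose (r2 / 2)) ^ 2 * M) := by ring
          rw [this]
          exact Nat.mul_le_mul (Nat.mul_le_mul_left _ h1) (Nat.mul_le_mul_left _ h2)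
      _ ≤ 4 ^ r1 * 4 ^ r2 := Nat.mul_le_mul (choose_half_sq_le r1) (choose_half_sq_le r2)
      _ = (2 ^ (r1 + r2)) ^ 2 := by
          rw [show (4:ℕ) = 2 ^ 2 by norm_num, ← pow_mul, ← pow_mul, ← pow_add, ← pow_mul]
          ring_nf
  exact (Nat.pow_le_pow_iff_left (by norm_num)).mp key

lemma choose_le_two_pow' (n k : ℕ) : n.choose k ≤ 2 ^ n := by
  by_cases h : k ≤ n
  · calc n.choose k ≤ ∑ m ∈ range (n + 1), n.choose m :=
        Finset.single_le_sum (fun _ _ => Nat.zero_le _) (by simp; omega)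
    _ = 2 ^ n := Nat.sum_range_choose n
  · rw [Nat.choose_eq_zero_of_lt (by omega)]; exact Nat.zero_le _

lemma erdos_LO {I : Type*} [Fintype I] [DecidableEq I] (a : I → ℤ) (ha : ∀ i, 0 < a i) (t : ℤ) :
    (univ.filter fun ε : I → Bool => (∑ i, if ε i then a i else -a i) = t).card
      ≤ (Fintype.card I).choose (Fintype.card I / 2) := by
  classical
  set F := (univ.filter fun ε : I → Bool => (∑ i, if ε i then a i else -a i) = t) with hF
  -- the signed sum in terms of the set A = {i | ε i}
  have hsum : ∀ ε : I → Bool, (∑ i, if ε i then a i else -a i)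
      = 2 * (∑ i ∈ univ.filter (fun i => ε i = true), a i) - ∑ i, a i := by
    intro ε
    rw [← Finset.sum_filter_add_sum_filter_not univ (fun i => ε i = true) a]
    rw [← Finset.sum_filter_add_sum_filter_not univ (fun i => ε i = true)
      (fun i => if ε i then a i else -a i)]
    have h1 : ∑ i ∈ univ.filter (fun i => ε i = true), (if ε i then a i else -a i)
        = ∑ i ∈ univ.filter (fun i => ε i = true), a i := by
      apply Finset.sum_congr rfl; intro i hi
      simp only [mem_filter] at hi; simp [hi.2]
    have h2 : ∑ i ∈ univ.filter (fun i => ¬ ε i = true), (if ε i then a i else -a i)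
        = -∑ i ∈ univ.filter (fun i => ¬ ε i = true), a i := by
      rw [← Finset.sum_neg_distrib]
      apply Finset.sum_congr rfl; intro i hi
      simp only [mem_filter] at hi; simp [hi.2]
    rw [h1, h2]; ring
  set T : (I → Bool) → Finset I := fun ε => univ.filter (fun i => ε i = true) with hT
  have hinj : Set.InjOn T F := by
    intro ε hε ε' hε' h
    funext i
    have := Finset.ext_iff.mp h i
    simp only [hT, mem_filter, mem_univ, true_and] at this
    rcases Bool.eq_false_or_eq_true (ε i) with h1 | h1 <;>
      rcases Bool.eq_false_or_eq_true (ε' i) with h2 | h2 <;> simp_all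
  have hcard : F.card = (F.image T).card := (Finset.card_image_of_injOn hinj).symm
  rw [hcard]
  apply IsAntichain.sperner
  intro A hA B hB hne hsub
  simp only [coe_image, Set.mem_image, mem_coe] at hA hB
  obtain ⟨ε, hε, rfl⟩ := hA
  obtain ⟨ε', hε', rfl⟩ := hB
  simp only [hF, mem_filter] at hε hε'
  have h1 := hsum ε
  have h2 := hsum ε'
  rw [hε.2] at h1
  rw [hε'.2] at h2
  have heq : ∑ i ∈ T ε, a i = ∑ i ∈ T ε', a i := by simp only [hT]; omega
  have hss : T ε ⊆ T ε' := hsub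
  have hdiff : ∑ i ∈ T ε' \ T ε, a i = 0 := by
    have := Finset.sum_sdiff hss (f := a)
    omega
  have hne' : (T ε' \ T ε).Nonempty := by
    rw [Finset.sdiff_nonempty]
    intro hc
    exact hne (Finset.Subset.antisymm hss hc)
  have : 0 < ∑ i ∈ T ε' \ T ε, a i := Finset.sum_pos (fun i _ => ha i) hne'
  omega

-- tsum of product over functions = power
lemma tsum_prod_pow {α : Type*} [Countable α] (g : α → ENNReal) :
    ∀ n : ℕ, ∑' w : Fin n → α, ∏ i, g (w i) = (∑' a, g a) ^ n := by
  intro n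
  induction n with
  | zero =>
    haveI : Unique (Fin 0 → α) := ⟨⟨fun i => i.elim0⟩, fun f => funext fun i => i.elim0⟩
    rw [tsum_eq_single default (fun b hb => absurd (Subsingleton.elim b default) hb)]
    simp
  | succ n ih =>
    let e : α × (Fin n → α) ≃ (Fin (n+1) → α) :=
      { toFun := fun p => Fin.cons p.1 p.2
        invFun := fun w => (w 0, fun i => w i.succ)
        left_inv := fun p => by simp
        right_inv := fun w => by funext i; refine Fin.cases ?_ ?_ i <;> simp }
    rw [← e.tsum_eq]
    have hterm : ∀ p : α × (Fin n → α), (∏ i, g (e p i)) = g p.1 * ∏ i, g (p.2 i) := by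
      rintro ⟨a, v⟩
      show (∏ i : Fin (n+1), g (Fin.cons (α := fun _ => α) a v i)) = g a * ∏ i : Fin n, g (v i)
      rw [Fin.prod_univ_succ]
      simp
    rw [tsum_congr hterm, ENNReal.tsum_prod (f := fun (a : α) (v : Fin n → α) => g a * ∏ i, g (v i))]
    calc ∑' (a : α) (v : Fin n → α), g a * ∏ i, g (v i)
        = ∑' (a : α), g a * ∑' v : Fin n → α, ∏ i, g (v i) :=
          tsum_congr fun a => ENNReal.tsum_mul_left
      _ = (∑' a, g a) * ∑' v : Fin n → α, ∏ i, g (v i) := ENNReal.tsum_mul_right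
      _ = (∑' a, g a) ^ (n + 1) := by rw [ih, pow_succ]; ring

-- counting factorization over fibers
lemma card_filter_fiber_prod {n : ℕ} {J : Type*} [Fintype J] [DecidableEq J]
    (κ : Fin n → J) (P : ∀ j : J, ({i : Fin n // κ i = j} → Bool) → Prop)
    [∀ j g, Decidable (P j g)] :
    (univ.filter fun ε : Fin n → Bool => ∀ j, P j (fun i => ε i.1)).card
      = ∏ j, (univ.filter fun g : {i : Fin n // κ i = j} → Bool => P j g).card := by
  classical
  rw [← Fintype.card_subtype]
  have e1 : {ε : Fin n → Bool // ∀ j, P j (fun i => ε i.1)}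
      ≃ ∀ j, {g : {i : Fin n // κ i = j} → Bool // P j g} := by
    refine Equiv.trans ?_ (Equiv.subtypePiEquivPi)
    refine Equiv.subtypeEquiv ⟨fun ε j i => ε i.1, fun g i => g (κ i) ⟨i, rfl⟩, ?_, ?_⟩ ?_
    · intro ε; rfl
    · intro g; funext j i
      obtain ⟨i, hi⟩ := i
      subst hi; rfl
    · intro ε; rfl
  rw [Fintype.card_congr e1, Fintype.card_pi]
  exact Finset.prod_congr rfl fun j _ => Fintype.card_subtype _

lemma prod_choose_M_le {d : ℕ} (hd : 5 ≤ d) (r : Fin d → ℕ) (M : ℕ)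
    (hM : ∀ t : ℕ, ∀ ht : t < 4, M ≤ r ⟨t, by omega⟩ + 1) :
    (∏ j, (r j).choose (r j / 2)) * M ^ 2 ≤ 2 ^ (∑ j, r j) := by
  classical
  have c : ∀ j : Fin d, ℕ := fun j => (r j).choose (r j / 2)
  set j0 : Fin d := ⟨0, by omega⟩
  set j1 : Fin d := ⟨1, by omega⟩
  set j2 : Fin d := ⟨2, by omega⟩
  set j3 : Fin d := ⟨3, by omega⟩
  set S : Finset (Fin d) := {j0, j1, j2, j3} with hS
  have hne01 : j0 ≠ j1 := by simp [j0, j1, Fin.ext_iff]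
  have hne02 : j0 ≠ j2 := by simp [j0, j2, Fin.ext_iff]
  have hne03 : j0 ≠ j3 := by simp [j0, j3, Fin.ext_iff]
  have hne12 : j1 ≠ j2 := by simp [j1, j2, Fin.ext_iff]
  have hne13 : j1 ≠ j3 := by simp [j1, j3, Fin.ext_iff]
  have hne23 : j2 ≠ j3 := by simp [j2, j3, Fin.ext_iff]
  have hprodS : ∀ f : Fin d → ℕ, ∏ j ∈ S, f j = f j0 * f j1 * f j2 * f j3 := by
    intro f
    rw [hS]
    rw [Finset.prod_insert (by simp [hne01, hne02, hne03]),
        Finset.prod_insert (by simp [hne12, hne13]),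
        Finset.prod_insert (by simp [hne23]), Finset.prod_singleton]
    ring
  have hsub : S ⊆ univ := Finset.subset_univ S
  have hsplit : ∀ f : Fin d → ℕ, (∏ j ∈ univ \ S, f j) * ∏ j ∈ S, f j = ∏ j, f j :=
    fun f => Finset.prod_sdiff hsub
  have h01 := choose_pair_le (hM 0 (by omega)) (hM 1 (by omega))
  have h23 := choose_pair_le (hM 2 (by omega)) (hM 3 (by omega))
  have hrest : ∏ j ∈ univ \ S, (r j).choose (r j / 2) ≤ ∏ j ∈ univ \ S, 2 ^ (r j) :=
    Finset.prod_le_prod' fun j _ => choose_le_two_pow' _ _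
  calc (∏ j, (r j).choose (r j / 2)) * M ^ 2
      = (∏ j ∈ univ \ S, (r j).choose (r j / 2)) *
        (((r j0).choose (r j0 / 2) * (r j1).choose (r j1 / 2) * M) *
         ((r j2).choose (r j2 / 2) * (r j3).choose (r j3 / 2) * M)) := by
        rw [← hsplit (fun j => (r j).choose (r j / 2)), hprodS]; ring
    _ ≤ (∏ j ∈ univ \ S, 2 ^ (r j)) * (2 ^ (r j0 + r j1) * 2 ^ (r j2 + r j3)) := by
        exact Nat.mul_le_mul hrest (Nat.mul_le_mul h01 h23)
    _ = 2 ^ (∑ j, r j) := by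
        rw [← Finset.prod_pow_eq_pow_sum]
        rw [← hsplit (fun j => 2 ^ (r j)), hprodS (fun j => 2 ^ (r j))]
        ring

noncomputable def rho8 (q : ℕ → ℝ) (d : ℕ) (u : ℕ × Fin d × Bool) : ENNReal :=
  if 1 ≤ u.1 then ENNReal.ofReal (q u.1 / (2 * d)) else 0

def psi8 (d : ℕ) (u : ℕ × Fin d × Bool) : Fin d → ℤ :=
  fun i => if i = u.2.1 then (if u.2.2 then 2 ^ u.1 else -(2 ^ u.1)) else 0

lemma psi8_ne_zero {d : ℕ} (u : ℕ × Fin d × Bool) : psi8 d u u.2.1 ≠ 0 := by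
  obtain ⟨m, k, ε⟩ := u
  simp only [psi8, if_pos rfl]
  cases ε <;> simp <;> positivity

lemma psi8_inj {d : ℕ} : Function.Injective (psi8 d) := by
  rintro ⟨m, k, ε⟩ ⟨m', k', ε'⟩ h
  have hk := congrFun h k
  simp only [psi8, if_pos rfl] at hk
  have hpos : (0:ℤ) < 2 ^ m := by positivity
  have hpos' : (0:ℤ) < 2 ^ m' := by positivity
  have hkk' : k = k' := by
    by_contra hne
    rw [if_neg hne] at hk
    cases ε <;> simp at hk <;> omega
  subst hkk'
  rw [if_pos rfl] at hk
  have hmm : m = m' ∧ ε = ε' := by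
    have h2 : ∀ a b : ℕ, (2:ℤ) ^ a = 2 ^ b → a = b := by
      intro a b hab
      have : (2:ℕ) ^ a = 2 ^ b := by exact_mod_cast hab
      exact Nat.pow_right_injective le_rfl this
    cases ε <;> cases ε' <;> simp at hk
    · exact ⟨hk, rfl⟩
    · omega
    · omega
    · exact ⟨hk, rfl⟩
  obtain ⟨rfl, rfl⟩ := hmm
  rfl

lemma psi8_pos_eq {d : ℕ} (n : ℕ) (k : Fin d) :
    (fun i => if i = k then (2:ℤ) ^ n else 0) = psi8 d (n, k, true) := by
  funext i; simp [psi8]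

lemma psi8_neg_eq {d : ℕ} (n : ℕ) (k : Fin d) :
    (fun i => if i = k then -((2:ℤ) ^ n) else 0) = psi8 d (n, k, false) := by
  funext i; simp [psi8]

section
variable {d : ℕ} (q : ℕ → ℝ) (pstep : PMF (Fin d → ℤ))

lemma pstep_eq8
    (hstep : ∀ (n : ℕ) (k : Fin d), 1 ≤ n →
      pstep (fun i => if i = k then 2 ^ n else 0) = ENNReal.ofReal (q n / (2 * d)) ∧
      pstep (fun i => if i = k then -(2 ^ n) else 0) = ENNReal.ofReal (q n / (2 * d)))
    (hstep0 : ∀ z : Fin d → ℤ,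
      (∀ (n : ℕ) (k : Fin d), 1 ≤ n →
        z ≠ (fun i => if i = k then 2 ^ n else 0) ∧
        z ≠ (fun i => if i = k then -(2 ^ n) else 0)) → pstep z = 0)
    (y : Fin d → ℤ) :
    pstep y = ∑' u : ℕ × Fin d × Bool, if psi8 d u = y then rho8 q d u else 0 := by
  classical
  by_cases h : ∃ u, psi8 d u = y
  · obtain ⟨u₀, rfl⟩ := h
    rw [tsum_eq_single u₀ (fun u hu => by
      rw [if_neg (fun hc => hu (psi8_inj hc))])]
    rw [if_pos rfl]
    obtain ⟨m, k, ε⟩ := u₀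
    by_cases hm : 1 ≤ m
    · rw [rho8, if_pos hm]
      cases ε
      · rw [← psi8_neg_eq]; exact (hstep m k hm).2
      · rw [← psi8_pos_eq]; exact (hstep m k hm).1
    · rw [rho8, if_neg hm]
      apply hstep0
      intro n k' hn
      constructor
      · rw [psi8_pos_eq]
        intro hc
        have := psi8_inj hc
        have : m = n := congrArg Prod.fst this
        omega
      · rw [psi8_neg_eq]
        intro hc
        have := psi8_inj hc
        have : m = n := congrArg Prod.fst this
        omega
  · push_neg at h
    have h1 : pstep y = 0 := hstep0 y (fun n k hn =>
      ⟨fun hc => h (n, k, true) (by rw [← psi8_pos_eq]; exact hc.symm),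
       fun hc => h (n, k, false) (by rw [← psi8_neg_eq]; exact hc.symm)⟩)
    rw [h1]
    symm
    exact ENNReal.tsum_eq_zero.mpr fun u => if_neg (h u)
end

section
variable {d : ℕ} (q : ℕ → ℝ) (pstep : PMF (Fin d → ℤ)) (μ : ℕ → PMF (Fin d → ℤ))

lemma mu_eq8 (hμ0 : μ 0 = PMF.pure 0)
    (hμ : ∀ n, μ (n + 1) = (μ n).bind fun s => pstep.map fun x => s + x)
    (hps : ∀ y, pstep y = ∑' u : ℕ × Fin d × Bool, if psi8 d u = y then rho8 q d u else 0)
    (n : ℕ) (x : Fin d → ℤ) :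
    μ n x = ∑' w : Fin n → ℕ × Fin d × Bool,
      (∏ i, rho8 q d (w i)) * (if (∑ i, psi8 d (w i)) = x then 1 else 0) := by
  classical
  induction n generalizing x with
  | zero =>
    haveI : Unique (Fin 0 → ℕ × Fin d × Bool) :=
      ⟨⟨fun i => i.elim0⟩, fun f => funext fun i => i.elim0⟩
    rw [tsum_eq_single default (fun b hb => absurd (Subsingleton.elim b default) hb)]
    rw [hμ0, PMF.pure_apply]
    simp [eq_comm]
  | succ n ih =>
    -- μ (n+1) x = ∑' s, μ n s * pstep (x - s)
    have step1 : μ (n + 1) x = ∑' s, μ n s * pstep (x - s) := by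
      rw [hμ n, PMF.bind_apply]
      refine tsum_congr fun s => ?_
      congr 1
      rw [PMF.map_apply]
      rw [tsum_eq_single (x - s) (fun y hy => by
        rw [if_neg]
        intro hc
        exact hy (by rw [hc]; abel))]
      rw [if_pos (by abel)]
    -- pstep (x - s) as sum over u, then swap and collapse s
    have step2 : μ (n + 1) x = ∑' u : ℕ × Fin d × Bool, rho8 q d u * μ n (x - psi8 d u) := by
      rw [step1]
      have : ∀ s, μ n s * pstep (x - s)
          = ∑' u : ℕ × Fin d × Bool, (if psi8 d u = x - s then rho8 q d u * μ n s else 0) := by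
        intro s
        rw [hps, ENNReal.tsum_mul_left.symm.trans (tsum_congr fun u => ?_)]
        rw [mul_ite, mul_zero, mul_comm]
      rw [tsum_congr this, ENNReal.tsum_comm]
      refine tsum_congr fun u => ?_
      rw [tsum_eq_single (x - psi8 d u) (fun s hs => by
        rw [if_neg]
        intro hc
        exact hs (by rw [hc]; abel)), if_pos (by abel)]
    rw [step2]
    -- apply IH and reassemble via cons equiv
    have step3 : ∀ u : ℕ × Fin d × Bool, rho8 q d u * μ n (x - psi8 d u)
        = ∑' w : Fin n → ℕ × Fin d × Bool,
            rho8 q d u * ((∏ i, rho8 q d (w i)) *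
              (if (psi8 d u + ∑ i, psi8 d (w i)) = x then 1 else 0)) := by
      intro u
      rw [ih, ← ENNReal.tsum_mul_left]
      refine tsum_congr fun w => ?_
      congr 2
      by_cases hc : (∑ i, psi8 d (w i)) = x - psi8 d u
      · rw [if_pos hc, if_pos (by rw [hc]; abel)]
      · rw [if_neg hc, if_neg (fun hc2 => hc (by rw [← hc2]; abel))]
    rw [tsum_congr step3]
    let e : (ℕ × Fin d × Bool) × (Fin n → ℕ × Fin d × Bool) ≃ (Fin (n+1) → ℕ × Fin d × Bool) :=
      { toFun := fun p => Fin.cons p.1 p.2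
        invFun := fun w => (w 0, fun i => w i.succ)
        left_inv := fun p => by simp
        right_inv := fun w => by funext i; refine Fin.cases ?_ ?_ i <;> simp }
    have he : ∀ p : (ℕ × Fin d × Bool) × (Fin n → ℕ × Fin d × Bool),
        (∏ i : Fin (n+1), rho8 q d (e p i)) *
          (if (∑ i : Fin (n+1), psi8 d (e p i)) = x then 1 else 0)
        = rho8 q d p.1 * ((∏ i, rho8 q d (p.2 i)) *
            (if (psi8 d p.1 + ∑ i, psi8 d (p.2 i)) = x then 1 else 0)) := by
      rintro ⟨u, w⟩
      show (∏ i : Fin (n+1), rho8 q d (Fin.cons (α := fun _ => ℕ × Fin d × Bool) u w i)) *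
          (if (∑ i : Fin (n+1), psi8 d (Fin.cons (α := fun _ => ℕ × Fin d × Bool) u w i)) = x
            then 1 else 0) = _
      rw [Fin.prod_univ_succ, Fin.sum_univ_succ]
      simp only [Fin.cons_zero, Fin.cons_succ]
      ring
    rw [← e.tsum_eq]
    rw [← ENNReal.tsum_prod (f := fun (u : ℕ × Fin d × Bool) (w : Fin n → ℕ × Fin d × Bool) => rho8 q d u * ((∏ i, rho8 q d (w i)) *
      (if (psi8 d u + ∑ i, psi8 d (w i)) = x then 1 else 0)))]
    exact (tsum_congr he).symm ▸ (tsum_congr fun p => (he p).symm).symm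

lemma count_eps_le {d n : ℕ} (m : Fin n → ℕ) (k : Fin n → Fin d) (x : Fin d → ℤ) :
    (univ.filter fun ε : Fin n → Bool => (∑ i, psi8 d (m i, k i, ε i)) = x).card
      ≤ ∏ j, ((univ.filter fun i => k i = j).card).choose
          ((univ.filter fun i => k i = j).card / 2) := by
  classical
  have hcond : ∀ ε : Fin n → Bool, ((∑ i, psi8 d (m i, k i, ε i)) = x) ↔
      ∀ j, (∑ i : {i : Fin n // k i = j},
        (if ε i.1 then (2:ℤ) ^ (m i.1) else -(2 ^ (m i.1)))) = x j := by
    intro ε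
    rw [funext_iff]
    refine forall_congr' fun j => ?_
    have h1 : (∑ i, psi8 d (m i, k i, ε i)) j
        = ∑ i, (if j = k i then (if ε i then (2:ℤ) ^ (m i) else -(2 ^ (m i))) else 0) := by
      rw [Finset.sum_apply]
      rfl
    have h2 : ∑ i, (if j = k i then (if ε i then (2:ℤ) ^ (m i) else -(2 ^ (m i))) else 0)
        = ∑ i ∈ univ.filter (fun i => k i = j),
            (if ε i then (2:ℤ) ^ (m i) else -(2 ^ (m i))) := by
      rw [Finset.sum_filter]
      exact Finset.sum_congr rfl fun i _ => if_congr eq_comm rfl rfl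
    have h3 : ∑ i ∈ univ.filter (fun i => k i = j),
          (if ε i then (2:ℤ) ^ (m i) else -(2 ^ (m i)))
        = ∑ i : {i : Fin n // k i = j},
            (if ε i.1 then (2:ℤ) ^ (m i.1) else -(2 ^ (m i.1))) := by
      rw [Finset.sum_subtype (p := fun i => k i = j) (univ.filter (fun i => k i = j)) (by simp)
        (fun i => (if ε i then (2:ℤ) ^ (m i) else -(2 ^ (m i))))]
    rw [h1, h2, h3]
  let P : ∀ j : Fin d, ({i : Fin n // k i = j} → Bool) → Prop := fun j g =>
    (∑ i : {i : Fin n // k i = j}, (if g i then (2:ℤ) ^ (m i.1) else -(2 ^ (m i.1)))) = x j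
  haveI : ∀ j g, Decidable (P j g) := fun j g => by
    show Decidable ((∑ i : {i : Fin n // k i = j},
      (if g i then (2:ℤ) ^ (m i.1) else -(2 ^ (m i.1)))) = x j)
    infer_instance
  have key := card_filter_fiber_prod k P
  calc (univ.filter fun ε : Fin n → Bool => (∑ i, psi8 d (m i, k i, ε i)) = x).card
      ≤ ∏ j, (univ.filter fun g : {i : Fin n // k i = j} → Bool => P j g).card := by
        rw [← key]
        apply Finset.card_le_card
        intro ε hε
        simp only [Finset.mem_filter, Finset.mem_univ, true_and] at hε ⊢
        exact fun j => ((hcond ε).mp hε) j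
    _ ≤ ∏ j, ((univ.filter fun i => k i = j).card).choose
          ((univ.filter fun i => k i = j).card / 2) := by
        refine Finset.prod_le_prod' fun j _ => ?_
        have h5 := erdos_LO (I := {i : Fin n // k i = j}) (fun i => (2:ℤ) ^ (m i.1))
          (fun i => by positivity) (x j)
        rw [Fintype.card_subtype] at h5
        refine le_trans (Finset.card_le_card fun g hg => ?_) h5
        simp only [Finset.mem_filter, Finset.mem_univ, true_and] at hg ⊢
        exact hg

lemma A_le {d : ℕ} (hd : 5 ≤ d) (n : ℕ) :
    ((∑ k : Fin n → Fin d, ∏ j,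
        (((univ.filter fun i => k i = j).card).choose
          (((univ.filter fun i => k i = j).card) / 2)) : ℕ) : ℝ)
      ≤ (d:ℝ)^n * 2^n / (((n/(2*d) : ℕ) : ℝ) + 1)^2
        + 2^n * (4 * 2^((n/(2*d) : ℕ)) * ((d:ℝ) - 1/2)^n) := by
  classical
  set m0 := n / (2*d) with hm0
  set r : (Fin n → Fin d) → Fin d → ℕ := fun k j => (univ.filter fun i => k i = j).card with hr
  have hrsum : ∀ k, ∑ j, r k j = n := by
    intro k
    have := Finset.card_eq_sum_card_fiberwise (f := k) (s := univ) (t := univ)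
      (fun i _ => mem_univ _)
    simpa [hr] using this.symm
  have hPle : ∀ k : Fin n → Fin d, (∏ j, (r k j).choose (r k j / 2)) ≤ 2 ^ n := by
    intro k
    calc ∏ j, (r k j).choose (r k j / 2) ≤ ∏ j, 2 ^ (r k j) :=
          Finset.prod_le_prod' fun j _ => choose_le_two_pow' _ _
      _ = 2 ^ (∑ j, r k j) := by rw [Finset.prod_pow_eq_pow_sum]
      _ = 2 ^ n := by rw [hrsum]
  -- mgf identity
  have hmgf : ∀ j : Fin d, ∑ k : Fin n → Fin d, ((1:ℝ)/2) ^ (r k j) = ((d:ℝ) - 1/2)^n := by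
    intro j
    have hterm : ∀ k : Fin n → Fin d,
        ((1:ℝ)/2) ^ (r k j) = ∏ i, (if k i = j then (1:ℝ)/2 else 1) := by
      intro k
      rw [← Finset.prod_filter_mul_prod_filter_not univ (fun i => k i = j)]
      have h1 : ∏ i ∈ univ.filter (fun i => k i = j), (if k i = j then (1:ℝ)/2 else 1)
          = ((1:ℝ)/2) ^ (r k j) := by
        rw [Finset.prod_congr rfl (fun i hi => if_pos (mem_filter.mp hi).2),
          Finset.prod_const, hr]
      have h2 : ∏ i ∈ univ.filter (fun i => ¬ k i = j), (if k i = j then (1:ℝ)/2 else 1)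
          = 1 := by
        rw [Finset.prod_congr rfl (fun i hi => if_neg (mem_filter.mp hi).2)]
        exact Finset.prod_const_one
      rw [h1, h2, mul_one]
    rw [Finset.sum_congr rfl fun k _ => hterm k]
    rw [← Fintype.prod_sum (f := fun (i : Fin n) (j' : Fin d) => if j' = j then (1:ℝ)/2 else 1)]
    have hinner : ∑ j' : Fin d, (if j' = j then (1:ℝ)/2 else 1) = (d:ℝ) - 1/2 := by
      have : ∀ j' : Fin d, (if j' = j then (1:ℝ)/2 else 1)
          = 1 - (if j' = j then (1:ℝ)/2 else 0) := by
        intro j'; split <;> norm_num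
      rw [Finset.sum_congr rfl fun j' _ => this j', Finset.sum_sub_distrib,
        Finset.sum_const, Finset.sum_ite_eq' univ j, if_pos (mem_univ j)]
      simp
    rw [Finset.prod_congr rfl fun i _ => hinner, Finset.prod_const]
    simp
  -- bad count
  have hbadcount : ∀ j : Fin d,
      ((univ.filter fun k : Fin n → Fin d => r k j < m0).card : ℝ)
        ≤ 2^m0 * ((d:ℝ) - 1/2)^n := by
    intro j
    have h1 : ((univ.filter fun k : Fin n → Fin d => r k j < m0).card : ℝ) * ((1:ℝ)/2)^m0
        ≤ ((d:ℝ) - 1/2)^n := by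
      rw [← hmgf j]
      calc ((univ.filter fun k : Fin n → Fin d => r k j < m0).card : ℝ) * ((1:ℝ)/2)^m0
          = ∑ _k ∈ univ.filter fun k : Fin n → Fin d => r k j < m0, ((1:ℝ)/2)^m0 := by
            rw [Finset.sum_const]; ring
        _ ≤ ∑ k ∈ univ.filter fun k : Fin n → Fin d => r k j < m0, ((1:ℝ)/2)^(r k j) := by
            refine Finset.sum_le_sum fun k hk => ?_
            have hk' := (mem_filter.mp hk).2
            exact pow_le_pow_of_le_one (by norm_num) (by norm_num) (by omega)
        _ ≤ ∑ k : Fin n → Fin d, ((1:ℝ)/2)^(r k j) :=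
            Finset.sum_le_sum_of_subset_of_nonneg (Finset.filter_subset _ _)
              (fun k _ _ => by positivity)
    have h2 : ((1:ℝ)/2)^m0 = ((2:ℝ)^m0)⁻¹ := by rw [one_div, inv_pow]
    rw [h2] at h1
    calc ((univ.filter fun k : Fin n → Fin d => r k j < m0).card : ℝ)
        = ((univ.filter fun k : Fin n → Fin d => r k j < m0).card : ℝ) * ((2:ℝ)^m0)⁻¹ * 2^m0 := by
          field_simp
      _ ≤ ((d:ℝ) - 1/2)^n * 2^m0 := mul_le_mul_of_nonneg_right h1 (by positivity)
      _ = 2^m0 * ((d:ℝ) - 1/2)^n := mul_comm _ _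
  -- split good/bad
  set Pg : (Fin n → Fin d) → Prop := fun k => ∀ j : Fin d, j.1 < 4 → m0 ≤ r k j with hPg
  show ((∑ k : Fin n → Fin d, ∏ j, ((r k j).choose (r k j / 2)) : ℕ) : ℝ)
      ≤ (d:ℝ)^n * 2^n / ((m0:ℝ) + 1)^2 + 2^n * (4 * 2^m0 * ((d:ℝ) - 1/2)^n)
  have hsplit := Finset.sum_filter_add_sum_filter_not univ Pg
    (fun k => ((∏ j, (r k j).choose (r k j / 2) : ℕ) : ℝ))
  rw [Nat.cast_sum, ← hsplit]
  have hdhalf : (0:ℝ) ≤ (d:ℝ) - 1/2 := by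
    have : (5:ℝ) ≤ (d:ℝ) := by exact_mod_cast hd
    linarith
  have hgood : ∑ k ∈ univ.filter Pg, ((∏ j, ((r k j).choose (r k j / 2)) : ℕ) : ℝ)
      ≤ (d:ℝ)^n * 2^n / ((m0:ℝ) + 1)^2 := by
    have hterm : ∀ k ∈ univ.filter Pg,
        ((∏ j, ((r k j).choose (r k j / 2)) : ℕ) : ℝ) ≤ 2^n / ((m0:ℝ) + 1)^2 := by
      intro k hk
      have hPgk := (mem_filter.mp hk).2
      have hM : ∀ t : ℕ, ∀ ht : t < 4, m0 + 1 ≤ r k ⟨t, by omega⟩ + 1 := by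
        intro t ht
        have := hPgk ⟨t, by omega⟩ (by simpa using ht)
        omega
      have hnat := prod_choose_M_le hd (r k) (m0 + 1) hM
      rw [hrsum k] at hnat
      have hcast : ((∏ j, ((r k j).choose (r k j / 2)) : ℕ) : ℝ) * ((m0:ℝ) + 1)^2
          ≤ 2^n := by
        have := (Nat.cast_le (α := ℝ)).mpr hnat
        push_cast at this
        exact_mod_cast this
      rw [le_div_iff₀ (by positivity)]
      exact hcast
    calc ∑ k ∈ univ.filter Pg, ((∏ j, ((r k j).choose (r k j / 2)) : ℕ) : ℝ)
        ≤ ∑ _k ∈ univ.filter Pg, ((2:ℝ)^n / ((m0:ℝ) + 1)^2) := Finset.sum_le_sum hterm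
      _ = ((univ.filter Pg).card : ℝ) * ((2:ℝ)^n / ((m0:ℝ) + 1)^2) := by
          rw [Finset.sum_const]; ring
      _ ≤ ((d:ℝ)^n) * ((2:ℝ)^n / ((m0:ℝ) + 1)^2) := by
          apply mul_le_mul_of_nonneg_right _ (by positivity)
          calc ((univ.filter Pg).card : ℝ) ≤ (Fintype.card (Fin n → Fin d) : ℝ) := by
                exact_mod_cast Finset.card_filter_le _ _
            _ = (d:ℝ)^n := by rw [Fintype.card_fun]; push_cast; simp
      _ = (d:ℝ)^n * 2^n / ((m0:ℝ) + 1)^2 := by ring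
  have hbad : ∑ k ∈ univ.filter (fun k => ¬ Pg k), ((∏ j, ((r k j).choose (r k j / 2)) : ℕ) : ℝ)
      ≤ 2^n * (4 * 2^m0 * ((d:ℝ) - 1/2)^n) := by
    set F4 : Finset (Fin d) := univ.filter (fun j : Fin d => j.1 < 4) with hF4
    have hsub : univ.filter (fun k => ¬ Pg k)
        ⊆ F4.biUnion (fun j => univ.filter fun k : Fin n → Fin d => r k j < m0) := by
      intro k hk
      have hk' := (mem_filter.mp hk).2
      have hk2 : ∃ j : Fin d, j.1 < 4 ∧ r k j < m0 := by
        by_contra hc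
        push_neg at hc
        exact hk' (fun j hj => hc j hj)
      obtain ⟨j, hj4, hjlt⟩ := hk2
      exact Finset.mem_biUnion.mpr ⟨j, mem_filter.mpr ⟨mem_univ _, hj4⟩,
        mem_filter.mpr ⟨mem_univ _, by omega⟩⟩
    have hF4card : F4.card ≤ 4 := by
      have himg : F4 ⊆ Finset.image (fun t : Fin 4 => (⟨t.1, by omega⟩ : Fin d)) univ := by
        intro j hj
        exact Finset.mem_image.mpr ⟨⟨j.1, (mem_filter.mp hj).2⟩, mem_univ _, by
          apply Fin.ext; rfl⟩
      calc F4.card ≤ (Finset.image (fun t : Fin 4 => (⟨t.1, by omega⟩ : Fin d)) univ).card :=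
            Finset.card_le_card himg
        _ ≤ (univ : Finset (Fin 4)).card := Finset.card_image_le
        _ = 4 := by simp
    have hbadc : ((univ.filter (fun k => ¬ Pg k)).card : ℝ) ≤ 4 * 2^m0 * ((d:ℝ) - 1/2)^n := by
      calc ((univ.filter (fun k => ¬ Pg k)).card : ℝ)
          ≤ ((F4.biUnion (fun j => univ.filter fun k : Fin n → Fin d => r k j < m0)).card : ℝ) := by
            exact_mod_cast Finset.card_le_card hsub
        _ ≤ ((∑ j ∈ F4, (univ.filter fun k : Fin n → Fin d => r k j < m0).card : ℕ) : ℝ) := by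
            exact_mod_cast Finset.card_biUnion_le
        _ = ∑ j ∈ F4, (((univ.filter fun k : Fin n → Fin d => r k j < m0).card : ℕ) : ℝ) := by
            push_cast; ring
        _ ≤ ∑ _j ∈ F4, ((2:ℝ)^m0 * ((d:ℝ) - 1/2)^n) := Finset.sum_le_sum fun j _ => hbadcount j
        _ = (F4.card : ℝ) * (2^m0 * ((d:ℝ) - 1/2)^n) := by rw [Finset.sum_const]; ring
        _ ≤ 4 * (2^m0 * ((d:ℝ) - 1/2)^n) := by
            apply mul_le_mul_of_nonneg_right _ (by positivity)
            exact_mod_cast hF4card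
        _ = 4 * 2^m0 * ((d:ℝ) - 1/2)^n := by ring
    calc ∑ k ∈ univ.filter (fun k => ¬ Pg k), ((∏ j, ((r k j).choose (r k j / 2)) : ℕ) : ℝ)
        ≤ ∑ _k ∈ univ.filter (fun k => ¬ Pg k), ((2:ℝ)^n) := by
          refine Finset.sum_le_sum fun k _ => ?_
          exact_mod_cast hPle k
      _ = ((univ.filter (fun k => ¬ Pg k)).card : ℝ) * 2^n := by rw [Finset.sum_const]; ring
      _ ≤ (4 * 2^m0 * ((d:ℝ) - 1/2)^n) * 2^n :=
          mul_le_mul_of_nonneg_right hbadc (by positivity)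
      _ = 2^n * (4 * 2^m0 * ((d:ℝ) - 1/2)^n) := by ring
  exact add_le_add hgood hbad

noncomputable def Q8 (q : ℕ → ℝ) : ℕ → ENNReal :=
  fun a => if 1 ≤ a then ENNReal.ofReal (q a) else 0

lemma rho8_eq {d : ℕ} (q : ℕ → ℝ) (hq0 : ∀ n, 0 ≤ q n) (u : ℕ × Fin d × Bool) :
    rho8 q d u = Q8 q u.1 * ENNReal.ofReal (1 / (2 * (d:ℝ))) := by
  unfold rho8 Q8
  by_cases h : 1 ≤ u.1
  · rw [if_pos h, if_pos h, ← ENNReal.ofReal_mul (hq0 _)]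
    congr 1; ring
  · rw [if_neg h, if_neg h, zero_mul]

lemma Q8_tsum (q : ℕ → ℝ) (hq0 : ∀ n, 0 ≤ q n) (hqsum : ∑' n : ℕ, q (n + 1) = 1) :
    ∑' a, Q8 q a = 1 := by
  have hsummable : Summable (fun a : ℕ => q (a + 1)) := by
    by_contra hc
    rw [tsum_eq_zero_of_not_summable hc] at hqsum
    norm_num at hqsum
  have h1 : ∑' a, Q8 q a = Q8 q 0 + ∑' a, Q8 q (a + 1) :=
    tsum_eq_zero_add' ENNReal.summable
  rw [h1]
  have h2 : Q8 q 0 = 0 := by simp [Q8]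
  have h3 : ∀ a : ℕ, Q8 q (a + 1) = ENNReal.ofReal (q (a + 1)) := by
    intro a; simp [Q8]
  rw [h2, zero_add, tsum_congr h3, ← ENNReal.ofReal_tsum_of_nonneg (fun a => hq0 _) hsummable,
    hqsum, ENNReal.ofReal_one]

lemma mu_le8 {d : ℕ} (hd : 5 ≤ d) (q : ℕ → ℝ) (hq0 : ∀ n, 0 ≤ q n)
    (hqsum : ∑' n : ℕ, q (n + 1) = 1) (μ : ℕ → PMF (Fin d → ℤ))
    (hexp : ∀ n x, μ n x = ∑' w : Fin n → ℕ × Fin d × Bool,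
      (∏ i, rho8 q d (w i)) * (if (∑ i, psi8 d (w i)) = x then 1 else 0))
    (n : ℕ) (x : Fin d → ℤ) :
    μ n x ≤ ENNReal.ofReal ((1:ℝ)/(((n/(2*d) : ℕ):ℝ) + 1)^2
      + 4 * 2^((n/(2*d) : ℕ)) * (1 - 1/(2*(d:ℝ)))^n) := by
  classical
  have hd0 : (0:ℝ) < d := by
    have : (0:ℕ) < d := by omega
    exact_mod_cast this
  set m0 := n / (2*d) with hm0
  set B := ENNReal.ofReal (1 / (2 * (d:ℝ))) with hB
  set A : ℕ := ∑ k : Fin n → Fin d, ∏ j,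
      (((univ.filter fun i => k i = j).card).choose
        (((univ.filter fun i => k i = j).card) / 2)) with hA
  rw [hexp n x]
  -- change variables to (m, v)
  let e1 : (Fin n → ℕ × (Fin d × Bool)) ≃ ((Fin n → ℕ) × (Fin n → Fin d × Bool)) :=
    Equiv.arrowProdEquivProdArrow _ _ _
  have hstep1 : (∑' w : Fin n → ℕ × Fin d × Bool,
      (∏ i, rho8 q d (w i)) * (if (∑ i, psi8 d (w i)) = x then 1 else 0))
      = ∑' m : Fin n → ℕ, ∑ v : Fin n → Fin d × Bool,
          (∏ i, rho8 q d (m i, v i)) * (if (∑ i, psi8 d (m i, v i)) = x then 1 else 0) := by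
    rw [← Equiv.tsum_eq e1.symm (fun w => (∏ i, rho8 q d (w i)) *
      (if (∑ i, psi8 d (w i)) = x then 1 else 0))]
    have hc : ∀ c : (Fin n → ℕ) × (Fin n → Fin d × Bool),
        (∏ i, rho8 q d (e1.symm c i)) * (if (∑ i, psi8 d (e1.symm c i)) = x then 1 else 0)
        = (∏ i, rho8 q d (c.1 i, c.2 i)) *
            (if (∑ i, psi8 d (c.1 i, c.2 i)) = x then (1:ENNReal) else 0) := fun c => rfl
    rw [tsum_congr hc]
    rw [ENNReal.tsum_prod (f := fun (m : Fin n → ℕ) (v : Fin n → Fin d × Bool) =>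
      (∏ i, rho8 q d (m i, v i)) * (if (∑ i, psi8 d (m i, v i)) = x then 1 else 0))]
    exact tsum_congr fun m => tsum_fintype _
  rw [hstep1]
  -- rewrite the product of rho8
  have hprod : ∀ (m : Fin n → ℕ) (v : Fin n → Fin d × Bool),
      (∏ i, rho8 q d (m i, v i)) = (∏ i, Q8 q (m i)) * B ^ n := by
    intro m v
    rw [Finset.prod_congr rfl (fun i _ => rho8_eq q hq0 (m i, v i)),
      Finset.prod_mul_distrib, Finset.prod_const, Finset.card_univ, Fintype.card_fin]
  -- bound the inner sum over v for fixed m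
  have hinner : ∀ m : Fin n → ℕ,
      (∑ v : Fin n → Fin d × Bool,
        (∏ i, rho8 q d (m i, v i)) * (if (∑ i, psi8 d (m i, v i)) = x then 1 else 0))
      ≤ (∏ i, Q8 q (m i)) * (B ^ n * A) := by
    intro m
    have h1 : ∀ v : Fin n → Fin d × Bool,
        (∏ i, rho8 q d (m i, v i)) * (if (∑ i, psi8 d (m i, v i)) = x then 1 else 0)
        = (∏ i, Q8 q (m i)) * B ^ n * (if (∑ i, psi8 d (m i, v i)) = x then 1 else 0) := by
      intro v; rw [hprod m v]
    rw [Finset.sum_congr rfl fun v _ => h1 v, ← Finset.mul_sum]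
    rw [mul_assoc]
    refine mul_le_mul_right (mul_le_mul_right ?_ _) _
    -- now bound ∑ v ind ≤ A
    let e2 : (Fin n → Fin d × Bool) ≃ ((Fin n → Fin d) × (Fin n → Bool)) :=
      Equiv.arrowProdEquivProdArrow _ _ _
    have h2 : (∑ v : Fin n → Fin d × Bool,
        (if (∑ i, psi8 d (m i, v i)) = x then (1:ENNReal) else 0))
        = ∑ k : Fin n → Fin d, ∑ ε : Fin n → Bool,
            (if (∑ i, psi8 d (m i, k i, ε i)) = x then (1:ENNReal) else 0) := by
      rw [← Equiv.sum_comp e2.symm (fun v => (if (∑ i, psi8 d (m i, v i)) = x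
        then (1:ENNReal) else 0))]
      rw [Fintype.sum_prod_type]
      rfl
    rw [h2]
    have h3 : ∀ k : Fin n → Fin d,
        (∑ ε : Fin n → Bool, (if (∑ i, psi8 d (m i, k i, ε i)) = x then (1:ENNReal) else 0))
        ≤ ((∏ j, (((univ.filter fun i => k i = j).card).choose
            (((univ.filter fun i => k i = j).card) / 2)) : ℕ) : ENNReal) := by
      intro k
      rw [Finset.sum_boole]
      exact_mod_cast Nat.cast_le.mpr (count_eps_le m k x)
    calc (∑ k : Fin n → Fin d, ∑ ε : Fin n → Bool,
          (if (∑ i, psi8 d (m i, k i, ε i)) = x then (1:ENNReal) else 0))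
        ≤ ∑ k : Fin n → Fin d, ((∏ j, (((univ.filter fun i => k i = j).card).choose
            (((univ.filter fun i => k i = j).card) / 2)) : ℕ) : ENNReal) :=
          Finset.sum_le_sum fun k _ => h3 k
      _ = (A : ENNReal) := by rw [hA]; push_cast; ring
  -- sum over m
  calc (∑' m : Fin n → ℕ, ∑ v : Fin n → Fin d × Bool,
        (∏ i, rho8 q d (m i, v i)) * (if (∑ i, psi8 d (m i, v i)) = x then 1 else 0))
      ≤ ∑' m : Fin n → ℕ, (∏ i, Q8 q (m i)) * (B ^ n * A) :=
        ENNReal.tsum_le_tsum fun m => hinner m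
    _ = (∑' m : Fin n → ℕ, ∏ i, Q8 q (m i)) * (B ^ n * A) := ENNReal.tsum_mul_right
    _ = B ^ n * A := by rw [tsum_prod_pow, Q8_tsum q hq0 hqsum, one_pow, one_mul]
    _ ≤ ENNReal.ofReal ((1:ℝ)/((m0:ℝ) + 1)^2 + 4 * 2^m0 * (1 - 1/(2*(d:ℝ)))^n) := by
        have hBpow : B ^ n = ENNReal.ofReal ((1 / (2 * (d:ℝ)))^n) := by
          rw [hB, ← ENNReal.ofReal_pow (by positivity)]
        have hAcast : (A : ENNReal) = ENNReal.ofReal ((A:ℕ):ℝ) := by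
          rw [ENNReal.ofReal_natCast]
        rw [hBpow, hAcast, ← ENNReal.ofReal_mul (by positivity)]
        apply ENNReal.ofReal_le_ofReal
        have hA_le := A_le hd n
        rw [← hm0] at hA_le
        have hmul := mul_le_mul_of_nonneg_left hA_le
          (show (0:ℝ) ≤ (1 / (2 * (d:ℝ)))^n by positivity)
        refine le_trans hmul (le_of_eq ?_)
        have key1 : (1/(2*(d:ℝ)))^n * ((d:ℝ)^n * 2^n) = 1 := by
          rw [← mul_pow, ← mul_pow]
          rw [show (1/(2*(d:ℝ))) * ((d:ℝ) * 2) = 1 by rw [mul_comm (d:ℝ) 2]; field_simp]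
          exact one_pow n
        have key2 : (1/(2*(d:ℝ)))^n * (2^n * ((d:ℝ) - 1/2)^n) = (1 - 1/(2*(d:ℝ)))^n := by
          rw [← mul_pow, ← mul_pow]
          congr 1
          field_simp
        calc (1 / (2 * (d:ℝ)))^n * ((d:ℝ)^n * 2^n / ((m0:ℝ) + 1)^2
              + 2^n * (4 * 2^m0 * ((d:ℝ) - 1/2)^n))
            = ((1/(2*(d:ℝ)))^n * ((d:ℝ)^n * 2^n)) * (1/((m0:ℝ) + 1)^2)
              + 4 * 2^m0 * ((1/(2*(d:ℝ)))^n * (2^n * ((d:ℝ) - 1/2)^n)) := by ring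
          _ = (1:ℝ)/((m0:ℝ) + 1)^2 + 4 * 2^m0 * (1 - 1/(2*(d:ℝ)))^n := by
              rw [key1, key2]; ring

lemma nat_succ_le_div_mul {n D : ℕ} (hD : 0 < D) : n + 1 ≤ D * (n / D + 1) := by
  have h1 := Nat.div_add_mod n D
  have h2 : n % D < D := Nat.mod_lt _ hD
  calc n + 1 = D * (n / D) + (n % D + 1) := by omega
    _ ≤ D * (n / D) + D := Nat.add_le_add_left (by omega) _
    _ = D * (n / D + 1) := by ring

lemma rho_lt_one {d : ℕ} (hd : 5 ≤ d) :
    (2:ℝ) ^ ((2*(d:ℝ))⁻¹) * (1 - 1/(2*(d:ℝ))) < 1 := by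
  have hd5 : (5:ℝ) ≤ (d:ℝ) := by exact_mod_cast hd
  have h2d1 : (0:ℝ) < 2*(d:ℝ) - 1 := by linarith
  have hkey : (2:ℝ) ^ ((2*(d:ℝ))⁻¹) < (2*(d:ℝ)) / (2*(d:ℝ) - 1) := by
    have hne : (2*d : ℕ) ≠ 0 := by omega
    rw [← pow_lt_pow_iff_left₀ (a := (2:ℝ) ^ ((2*(d:ℝ))⁻¹)) (b := (2*(d:ℝ)) / (2*(d:ℝ) - 1))
      (by positivity) (by positivity) hne]
    have hl : ((2:ℝ) ^ ((2*(d:ℝ))⁻¹)) ^ (2*d : ℕ) = 2 := by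
      rw [← Real.rpow_natCast ((2:ℝ) ^ ((2*(d:ℝ))⁻¹)) (2*d), ← Real.rpow_mul (by norm_num)]
      have h3 : ((2*(d:ℝ))⁻¹ * ((2*d : ℕ) : ℝ)) = 1 := by
        push_cast
        field_simp
      rw [h3, Real.rpow_one]
    rw [hl]
    have hber : (1 + 1/(2*(d:ℝ) - 1)) ^ (2*d : ℕ) ≥ 1 + (2*d : ℕ) * (1/(2*(d:ℝ) - 1)) := by
      apply one_add_mul_le_pow
      have : (0:ℝ) < 1/(2*(d:ℝ) - 1) := by positivity
      linarith
    have heq : (2*(d:ℝ)) / (2*(d:ℝ) - 1) = 1 + 1/(2*(d:ℝ) - 1) := by field_simp; ring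
    rw [heq]
    have h2 : (1:ℝ) + (2*d : ℕ) * (1/(2*(d:ℝ) - 1)) > 2 := by
      have hc : ((2*d : ℕ) : ℝ) = 2*(d:ℝ) := by push_cast; ring
      rw [hc, mul_one_div]
      have h3 : (1:ℝ) < 2*(d:ℝ) / (2*(d:ℝ) - 1) := by
        rw [lt_div_iff₀ h2d1]
        linarith
      linarith
    linarith
  calc (2:ℝ) ^ ((2*(d:ℝ))⁻¹) * (1 - 1/(2*(d:ℝ)))
      < ((2*(d:ℝ)) / (2*(d:ℝ) - 1)) * (1 - 1/(2*(d:ℝ))) := by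
        apply mul_lt_mul_of_pos_right hkey
        have : 1/(2*(d:ℝ)) < 1 := by
          rw [div_lt_one (by linarith)]; linarith
        linarith
    _ = 1 := by field_simp

lemma bound_summable {d : ℕ} (hd : 5 ≤ d) :
    Summable (fun n : ℕ => (1:ℝ)/(((n/(2*d) : ℕ):ℝ) + 1)^2
      + 4 * 2^((n/(2*d) : ℕ)) * (1 - 1/(2*(d:ℝ)))^n) := by
  have hd5 : (5:ℝ) ≤ (d:ℝ) := by exact_mod_cast hd
  set ρ : ℝ := (2:ℝ) ^ ((2*(d:ℝ))⁻¹) * (1 - 1/(2*(d:ℝ))) with hρ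
  have h1md : (0:ℝ) ≤ 1 - 1/(2*(d:ℝ)) := by
    have : 1/(2*(d:ℝ)) ≤ 1 := by
      rw [div_le_one (by linarith)]; linarith
    linarith
  have hρ0 : 0 ≤ ρ := mul_nonneg (by positivity) h1md
  have hρ1 : ρ < 1 := rho_lt_one hd
  apply Summable.add
  · have hbase : Summable (fun n : ℕ => (2*(d:ℝ))^2 * (1/((n:ℝ)+1)^2)) := by
      apply Summable.mul_left
      have h2 := (summable_nat_add_iff 1).mpr
        (Real.summable_one_div_nat_pow.mpr (show 1 < 2 by norm_num))
      refine h2.congr fun n => ?_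
      push_cast
      ring
    refine Summable.of_nonneg_of_le (fun n => by positivity) (fun n => ?_) hbase
    set m0 := n / (2*d) with hm0
    have hlt : (n:ℝ) + 1 ≤ 2*(d:ℝ) * ((m0:ℝ) + 1) := by
      have hnat : n + 1 ≤ 2*d * (m0 + 1) := nat_succ_le_div_mul (by omega)
      exact_mod_cast hnat
    rw [div_le_iff₀ (by positivity)]
    have h0 : ((n:ℝ)+1)^2 ≤ (2*(d:ℝ))^2 * ((m0:ℝ)+1)^2 := by
      calc ((n:ℝ)+1)^2 ≤ (2*(d:ℝ) * ((m0:ℝ) + 1))^2 := by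
            apply pow_le_pow_left₀ (by positivity) hlt
        _ = (2*(d:ℝ))^2 * ((m0:ℝ)+1)^2 := by ring
    calc (1:ℝ) = ((n:ℝ)+1)^2 * (1/((n:ℝ)+1)^2) := by field_simp
      _ ≤ ((2*(d:ℝ))^2 * ((m0:ℝ)+1)^2) * (1/((n:ℝ)+1)^2) := by
          apply mul_le_mul_of_nonneg_right h0 (by positivity)
      _ = (2*(d:ℝ))^2 * (1/((n:ℝ)+1)^2) * ((m0:ℝ)+1)^2 := by ring
  · have hgeo : Summable (fun n : ℕ => 4 * ρ^n) :=
      (summable_geometric_of_lt_one hρ0 hρ1).mul_left 4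
    refine Summable.of_nonneg_of_le (fun n => by positivity) (fun n => ?_) hgeo
    set m0 := n / (2*d) with hm0
    have h1 : ((m0:ℕ):ℝ) ≤ (n:ℝ) / (2*(d:ℝ)) := by
      have := Nat.cast_div_le (m := n) (n := 2*d) (α := ℝ)
      rw [hm0]
      push_cast at this ⊢
      exact this
    have hpow : (2:ℝ)^m0 ≤ ((2:ℝ) ^ ((2*(d:ℝ))⁻¹))^n := by
      have hsplit : ((2:ℝ) ^ ((2*(d:ℝ))⁻¹))^n = (2:ℝ) ^ (((2*(d:ℝ))⁻¹) * n) := by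
        rw [← Real.rpow_natCast ((2:ℝ) ^ ((2*(d:ℝ))⁻¹)) n, ← Real.rpow_mul (by norm_num)]
      rw [hsplit, ← Real.rpow_natCast 2 m0]
      apply Real.rpow_le_rpow_of_exponent_le (by norm_num)
      rw [inv_mul_eq_div]
      exact h1
    calc 4 * 2^m0 * (1 - 1/(2*(d:ℝ)))^n
        ≤ 4 * ((2:ℝ) ^ ((2*(d:ℝ))⁻¹))^n * (1 - 1/(2*(d:ℝ)))^n := by
          apply mul_le_mul_of_nonneg_right _ (by positivity)
          have h4 : (0:ℝ) ≤ 4 := by norm_num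
          nlinarith [hpow]
      _ = 4 * ρ^n := by rw [hρ, mul_pow]; ring

/-- For the Williamson-type walk with step distribution `P(X = ±2^n e_k) = q_n/(2d)`,
`q_n ∼ c (log n)/2^{n(d-2)}`, the Green function `G(0,x) = ∑_{n≥0} P(S(n) = x)` satisfies
`lim_{n→∞} 2^{(d-2)n} G(0, 2^n e_j) = ∞` for each `j`. -/
theorem stmt_8 (d : ℕ) (hd : 5 ≤ d) (c : ℝ) (hc : 0 < c) (q : ℕ → ℝ)
    (hq0 : ∀ n, 0 ≤ q n) (hqsum : ∑' n : ℕ, q (n + 1) = 1)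
    (hasym : Tendsto (fun n : ℕ => q n / (c * Real.log n / 2 ^ (n * (d - 2))))
      atTop (nhds 1))
    (pstep : PMF (Fin d → ℤ))
    (hstep : ∀ (n : ℕ) (k : Fin d), 1 ≤ n →
      pstep (fun i => if i = k then 2 ^ n else 0) = ENNReal.ofReal (q n / (2 * d)) ∧
      pstep (fun i => if i = k then -(2 ^ n) else 0) = ENNReal.ofReal (q n / (2 * d)))
    (hstep0 : ∀ z : Fin d → ℤ,
      (∀ (n : ℕ) (k : Fin d), 1 ≤ n →
        z ≠ (fun i => if i = k then 2 ^ n else 0) ∧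
        z ≠ (fun i => if i = k then -(2 ^ n) else 0)) → pstep z = 0)
    (μ : ℕ → PMF (Fin d → ℤ)) (hμ0 : μ 0 = PMF.pure 0)
    (hμ : ∀ n, μ (n + 1) = (μ n).bind fun s => pstep.map fun x => s + x)
    (G : (Fin d → ℤ) → ℝ) (hG : ∀ x, G x = ∑' n : ℕ, (μ n x).toReal)
    (j : Fin d) :
    Tendsto (fun n : ℕ => (2 : ℝ) ^ ((d - 2) * n) * G (fun i => if i = j then 2 ^ n else 0))
      atTop atTop := by
  have hd0 : (0:ℝ) < d := by
    have : (0:ℕ) < d := by omega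
    exact_mod_cast this
  have hps := pstep_eq8 q pstep hstep hstep0
  have hexp := mu_eq8 q pstep μ hμ0 hμ hps
  have hbound := mu_le8 hd q hq0 hqsum μ hexp
  have hbnd0 : ∀ n : ℕ, 0 ≤ (1:ℝ)/(((n/(2*d) : ℕ):ℝ) + 1)^2
      + 4 * 2^((n/(2*d) : ℕ)) * (1 - 1/(2*(d:ℝ)))^n := by
    intro n
    have hd5 : (5:ℝ) ≤ (d:ℝ) := by exact_mod_cast hd
    have h1md : (0:ℝ) ≤ 1 - 1/(2*(d:ℝ)) := by
      have : 1/(2*(d:ℝ)) ≤ 1 := by rw [div_le_one (by linarith)]; linarith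
      linarith
    positivity
  have hfin : ∀ x, (∑' n, μ n x) ≠ ⊤ := by
    intro x
    have h1 : ∑' n, μ n x ≤ ∑' n : ℕ, ENNReal.ofReal ((1:ℝ)/(((n/(2*d) : ℕ):ℝ) + 1)^2
        + 4 * 2^((n/(2*d) : ℕ)) * (1 - 1/(2*(d:ℝ)))^n) :=
      ENNReal.tsum_le_tsum (fun n => hbound n x)
    rw [← ENNReal.ofReal_tsum_of_nonneg hbnd0 (bound_summable hd)] at h1
    exact ne_top_of_le_ne_top ENNReal.ofReal_ne_top h1
  have hsumm : ∀ x, Summable (fun n => (μ n x).toReal) :=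
    fun x => ENNReal.summable_toReal (hfin x)
  have hμ1 : ∀ y, μ 1 y = pstep y := by
    intro y
    rw [hμ 0, hμ0, PMF.pure_bind]
    have h : (fun x : Fin d → ℤ => 0 + x) = id := funext fun x => zero_add x
    rw [h, PMF.map_id]
  have hGge : ∀ N : ℕ, 1 ≤ N →
      q N / (2*(d:ℝ)) ≤ G (fun i => if i = j then 2^N else 0) := by
    intro N hN
    set x : Fin d → ℤ := (fun i => if i = j then (2:ℤ)^N else 0) with hx
    rw [hG x]
    have h2 : (μ 1 x).toReal = q N / (2*(d:ℝ)) := by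
      rw [hμ1 x, hx, (hstep N j hN).1,
        ENNReal.toReal_ofReal (div_nonneg (hq0 N) (by positivity))]
    rw [← h2]
    exact Summable.le_tsum (hsumm x) 1 (fun _ _ => ENNReal.toReal_nonneg)
  -- the divergence of the lower bound
  have hlog : Tendsto (fun n : ℕ => c * Real.log n) atTop atTop :=
    (Real.tendsto_log_atTop.comp tendsto_natCast_atTop_atTop).const_mul_atTop hc
  have hprod : Tendsto (fun n : ℕ =>
      (q n / (c * Real.log n / 2 ^ (n * (d - 2)))) * (c * Real.log n)) atTop atTop :=
    Tendsto.pos_mul_atTop (by norm_num) hasym hlog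
  have heven : (fun n : ℕ =>
      (q n / (c * Real.log n / 2 ^ (n * (d - 2)))) * (c * Real.log n))
      =ᶠ[atTop] (fun n : ℕ => q n * 2 ^ (n * (d-2))) := by
    rw [Filter.eventuallyEq_iff_exists_mem]
    refine ⟨{n | 2 ≤ n}, mem_atTop 2, fun n hn => ?_⟩
    have hn2 : (2:ℕ) ≤ n := hn
    have hlogpos : 0 < Real.log n := Real.log_pos (by exact_mod_cast hn2)
    have hclog : c * Real.log n ≠ 0 := by positivity
    have hpow : ((2:ℝ)) ^ (n*(d-2)) ≠ 0 := by positivity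
    field_simp
  have h3 : Tendsto (fun n : ℕ => q n * 2 ^ (n * (d-2))) atTop atTop :=
    hprod.congr' heven
  have h4 : Tendsto (fun n : ℕ => q n * 2 ^ (n * (d-2)) / (2*(d:ℝ))) atTop atTop :=
    h3.atTop_div_const (by positivity)
  apply tendsto_atTop_mono' atTop _ h4
  filter_upwards [eventually_ge_atTop 1] with n hn
  calc q n * 2 ^ (n * (d-2)) / (2*(d:ℝ))
      = 2 ^ ((d-2)*n) * (q n / (2*(d:ℝ))) := by rw [mul_comm (d-2) n]; ring
    _ ≤ 2 ^ ((d-2)*n) * G (fun i => if i = j then 2^n else 0) :=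
        mul_le_mul_of_nonneg_left (hGge n hn) (by positivity)
end
end
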